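/- Let ops : List (Option α) be a valid operation list and let j be a position with ops[j] = none (a pop). Then there exists a unique index i < j such that ops[i] = some a for some value a and the segment of operations strictly between positions i and j is balanced, meaning it contains equally many `some` (push) and `none` (pop) operations and every prefix of that segment contains at least as many pushes as pops; moreover, the value removed by the pop at position j is exactly a, the value pushed at the matching position i. In particular, the push/pop pairs of a valid operation list are well nested. -/

import Mathlib

/-- One step of stack execution: `some a` pushes `a` onto the top,
`none` pops the top element (tail of the empty list is empty). -/
def stackStep {α : Type*} (s : List α) : Option α → List α
  | some a => a :: s
  | none => s.tail

/-- The final stack state after executing the operation list `ops`,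
starting from the empty stack. -/
def stackRun {α : Type*} (ops : List (Option α)) : List α :=
  ops.foldl stackStep []

/-- An operation list is valid when no pop is performed on an empty stack:
for every prefix ending in `none`, the stack state just before that `none`
is nonempty. -/
def stackValid {α : Type*} (ops : List (Option α)) : Prop :=
  ∀ pre : List (Option α), pre ++ [none] <+: ops → stackRun pre ≠ []

/-- A segment of operations is balanced when it contains equally many pushes
(`some`) and pops (`none`), and every prefix of it contains at least as many
pushes as pops. -/
def balancedOps {α : Type*} (l : List (Option α)) : Prop :=
  l.countP Option.isSome = l.countP Option.isNone ∧
  ∀ p : List (Option α), p <+: l → p.countP Option.isNone ≤ p.countP Option.isSome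

/-
A pop removes the value of the most recent push that has not been popped yet.
Walking back from the pop: if the previous operation is a push it is the match, and if it is a
pop, its own match is found recursively and the balanced block between them is skipped.
Uniqueness is pure counting: if two pushes `i < i'` both matched the pop, the operations
strictly between `i` and `i'` would contain one pop more than pushes, which no prefix of a
balanced segment does.
-/

section Balanced

variable {α : Type*}

lemma balancedOps_nil : balancedOps ([] : List (Option α)) := by
  simp [balancedOps]

lemma List.prefix_or_eq_append_of_prefix_append {β : Type*} {p l m : List β} (h : p <+: l ++ m) :
    p <+: l ∨ ∃ r, r <+: m ∧ p = l ++ r := by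
  rcases List.prefix_or_prefix_of_prefix h (List.prefix_append l m) with hpl | ⟨r, rfl⟩
  · exact .inl hpl
  · exact .inr ⟨r, (List.prefix_append_right_inj l).1 h, rfl⟩

lemma balancedOps.append {l m : List (Option α)} (hl : balancedOps l) (hm : balancedOps m) :
    balancedOps (l ++ m) := by
  refine ⟨by simp only [List.countP_append, hl.1, hm.1], fun p hp => ?_⟩
  rcases List.prefix_or_eq_append_of_prefix_append hp with hp | ⟨r, hr, rfl⟩
  · exact hl.2 p hp
  · have := hm.2 r hr
    simp only [List.countP_append, hl.1]
    omega

lemma balancedOps.push_pop {l : List (Option α)} (hl : balancedOps l) (a : α) :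
    balancedOps (some a :: l ++ [none]) := by
  refine ⟨by simp [List.countP_append, hl.1], fun p hp => ?_⟩
  rcases List.prefix_cons_iff.1 hp with rfl | ⟨t, rfl, ht⟩
  · simp
  rcases List.prefix_concat_iff.1 ht with rfl | ht
  · simp [List.countP_append, hl.1]
  · have := hl.2 t ht
    simp only [List.countP_cons, Option.isNone_some, Option.isSome_some, Bool.false_eq_true,
      ↓reduceIte]
    omega

lemma not_balancedOps_append_some_cons {r q : List (Option α)} (a : α)
    (hrq : balancedOps (r ++ some a :: q)) (hq : balancedOps q) : False := by
  have htotal := hrq.1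
  have hr := hrq.2 r (List.prefix_append r _)
  simp only [List.countP_append, List.countP_cons, Option.isNone_some, Option.isSome_some,
    Bool.false_eq_true, ↓reduceIte, hq.1] at htotal
  omega

lemma eq_of_append_some_cons_eq {p p' q q' : List (Option α)} {a a' : α}
    (h : p ++ some a :: q = p' ++ some a' :: q') (hq : balancedOps q) (hq' : balancedOps q') :
    p = p' := by
  rcases List.append_eq_append_iff.1 h with ⟨_ | ⟨x, r⟩, rfl, hr⟩ | ⟨_ | ⟨x, r⟩, rfl, hr⟩
  · simp
  · obtain ⟨-, rfl⟩ := List.cons_eq_cons.1 hr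
    exact (not_balancedOps_append_some_cons a' hq hq').elim
  · simp
  · obtain ⟨-, rfl⟩ := List.cons_eq_cons.1 hr
    exact (not_balancedOps_append_some_cons a hq' hq).elim

end Balanced

section Run

variable {α : Type*}

lemma stackRun_append_singleton (l : List (Option α)) (op : Option α) :
    stackRun (l ++ [op]) = stackStep (stackRun l) op := by
  simp [stackRun, List.foldl_append]

lemma exists_balancedOps_of_stackRun_eq_cons {l : List (Option α)} {a : α} {s : List α}
    (h : stackRun l = a :: s) :
    ∃ p q, l = p ++ some a :: q ∧ balancedOps q ∧ stackRun p = s := by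
  induction hn : l.length using Nat.strong_induction_on generalizing l a s with
  | _ n ih =>
  obtain rfl | ⟨l, op, rfl⟩ := l.eq_nil_or_concat'
  · simp [stackRun] at h
  rw [stackRun_append_singleton] at h
  cases op with
  | some b =>
    obtain ⟨rfl, rfl⟩ := List.cons_eq_cons.1 h
    exact ⟨l, [], rfl, balancedOps_nil, rfl⟩
  | none =>
    obtain ⟨c, hl⟩ : ∃ c, stackRun l = c :: a :: s := by
      rcases hl : stackRun l with _ | ⟨c, t⟩
      · simp [stackStep, hl] at h
      · simp only [stackStep, hl, List.tail_cons] at h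
        exact ⟨c, h ▸ rfl⟩
    obtain ⟨p', q', rfl, hq', hp'⟩ := ih _ (by simp [← hn]) hl rfl
    have hshorter : p'.length < n := by
      simp only [← hn, List.length_append, List.length_cons]
      omega
    obtain ⟨p, q, rfl, hq, hp⟩ := ih _ hshorter hp' rfl
    exact ⟨p, q ++ (some c :: q' ++ [none]), by simp, hq.append (hq'.push_pop c), hp⟩

lemma stackValid.stackRun_take_ne_nil {ops : List (Option α)} (hv : stackValid ops) {j : ℕ}
    (hj : ops[j]? = some none) : stackRun (ops.take j) ≠ [] := by
  apply hv
  rw [← Option.toList_some none, ← hj, ← List.take_add_one]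
  exact List.take_prefix _ _

end Run

lemma List.take_eq_take_append_cons_take_drop {β : Type*} {l : List β} {i j : ℕ} {x : β}
    (hx : l[i]? = some x) (hij : i < j) :
    l.take j = l.take i ++ x :: (l.drop (i + 1)).take (j - (i + 1)) := by
  obtain ⟨k, rfl⟩ := Nat.exists_eq_add_of_lt hij
  rw [Nat.add_right_comm, List.take_add, List.take_add_one, hx, Option.toList_some,
    List.append_assoc, Nat.add_sub_cancel_left, List.singleton_append]

/-- LIFO matching: in a valid operation list, every pop at position `j` has a
unique matching push at a position `i < j` such that the operations strictly
between `i` and `j` form a balanced segment, and the value removed by the pop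
at `j` (the head of the stack state after the first `j` operations) is exactly
the value pushed at `i`. -/
theorem pop_has_unique_matching_push {α : Type*} (ops : List (Option α))
    (hvalid : stackValid ops) (j : ℕ) (hj : ops[j]? = some none) :
    ∃! i : ℕ, i < j ∧
      (∃ a, ops[i]? = some (some a) ∧ (stackRun (ops.take j)).head? = some a) ∧
      balancedOps ((ops.drop (i + 1)).take (j - (i + 1))) := by
  obtain ⟨a, s, hrun⟩ := List.ne_nil_iff_exists_cons.1 (hvalid.stackRun_take_ne_nil hj)
  obtain ⟨p, q, hsplit, hq, -⟩ := exists_balancedOps_of_stackRun_eq_cons hrun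
  have hpj : p.length < j := by
    have := congrArg List.length hsplit
    simp only [List.length_take, List.length_append, List.length_cons] at this
    omega
  have hp : ops[p.length]? = some (some a) := by
    rw [← List.getElem?_take_of_lt hpj, hsplit, List.getElem?_append_right le_rfl]
    simp
  refine ⟨p.length, ⟨hpj, ⟨a, hp, by simp [hrun]⟩, ?_⟩, ?_⟩
  · have hlen : p.length < ops.length := (List.getElem?_eq_some_iff.1 hp).1
    rw [List.take_eq_take_append_cons_take_drop hp hpj] at hsplit
    have hseg := (List.append_inj hsplit (by simp [hlen.le])).2
    rwa [(List.cons_eq_cons.1 hseg).2]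
  · rintro i ⟨hij, ⟨b, hi, -⟩, hbal⟩
    rw [List.take_eq_take_append_cons_take_drop hi hij] at hsplit
    have hlen := congrArg List.length (eq_of_append_some_cons_eq hsplit hbal hq)
    have := (List.getElem?_eq_some_iff.1 hi).1
    simp only [List.length_take] at hlen
    omega
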